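/- (7/5)·∫_ℝ e^{-x} Q^5 dx = (3/2)·∫_ℝ e^{-x} Q^2 dx. -/

import Mathlib

/-!
With `t = tanh (3x/2)` one has `cosh (3x/2)^2 * Q^3 = 5/2`, hence
`Q' = -Q t`, `t' = 3/5 Q^3` and `t^2 + 2/5 Q^3 = 1`. These give the explicit primitive
`(e^{-x} Q^2 (t - 1/2))' = e^{-x} (7/5 Q^5 - 3/2 Q^2)`. Since `Q ≤ 3 e^{-|x|}`, both the
primitive and its derivative are integrable on `ℝ`, so the integral of the derivative vanishes.
-/

noncomputable def Q : ℝ → ℝ := fun x => (5/2 : ℝ) ^ ((1:ℝ)/3) * (Real.cosh (3*x/2)) ^ (-(2:ℝ)/3)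

open Real MeasureTheory

lemma Q_pos (x : ℝ) : 0 < Q x := by
  unfold Q
  positivity

lemma cosh_sq_mul_Q_pow_three (x : ℝ) : cosh (3 * x / 2) ^ 2 * Q x ^ 3 = 5 / 2 := by
  have hc := cosh_pos (3 * x / 2)
  rw [Q, mul_pow, ← rpow_mul_natCast (by norm_num), ← rpow_mul_natCast hc.le]
  norm_num [rpow_neg hc.le]
  field_simp

lemma tanh_sq_add_Q_pow_three (x : ℝ) : tanh (3 * x / 2) ^ 2 + 2 / 5 * Q x ^ 3 = 1 := by
  have hQ := cosh_sq_mul_Q_pow_three x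
  have hcs := cosh_sq_sub_sinh_sq (3 * x / 2)
  rw [tanh_eq_sinh_div_cosh]
  field_simp
  linear_combination 2 * hQ - 5 * hcs

lemma hasDerivAt_three_mul_div_two (x : ℝ) :
    HasDerivAt (fun x : ℝ => 3 * x / 2) (3 / 2) x := by
  simpa using ((hasDerivAt_id x).const_mul 3).div_const 2

lemma hasDerivAt_Q (x : ℝ) : HasDerivAt Q (-(Q x * tanh (3 * x / 2))) x := by
  have hc := cosh_pos (3 * x / 2)
  have h := ((hasDerivAt_three_mul_div_two x).cosh.rpow_const (p := -(2:ℝ)/3)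
    (Or.inl hc.ne')).const_mul ((5/2 : ℝ) ^ ((1:ℝ)/3))
  refine h.congr_deriv ?_
  simp only [Q]
  rw [rpow_sub_one hc.ne', tanh_eq_sinh_div_cosh]
  field_simp

lemma hasDerivAt_tanh_three_mul_div_two (x : ℝ) :
    HasDerivAt (fun x => tanh (3 * x / 2)) (3 / 5 * Q x ^ 3) x := by
  have hc := cosh_pos (3 * x / 2)
  have h := (hasDerivAt_three_mul_div_two x).sinh.div
    (hasDerivAt_three_mul_div_two x).cosh hc.ne'
  simp_rw [tanh_eq_sinh_div_cosh]
  refine h.congr_deriv ?_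
  have hQ := cosh_sq_mul_Q_pow_three x
  have hcs := cosh_sq_sub_sinh_sq (3 * x / 2)
  rw [div_eq_iff (by positivity)]
  linear_combination 3 / 2 * hcs - 3 / 5 * hQ

noncomputable def primitive (x : ℝ) : ℝ := exp (-x) * Q x ^ 2 * (tanh (3 * x / 2) - 1 / 2)

lemma hasDerivAt_primitive (x : ℝ) :
    HasDerivAt primitive (7 / 5 * (exp (-x) * Q x ^ 5) - 3 / 2 * (exp (-x) * Q x ^ 2)) x := by
  have h := (((hasDerivAt_neg x).exp).fun_mul ((hasDerivAt_Q x).fun_pow 2)).fun_mul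
    ((hasDerivAt_tanh_three_mul_div_two x).sub_const (1 / 2))
  refine h.congr_deriv ?_
  linear_combination -2 * Real.exp (-x) * Q x ^ 2 * tanh_sq_add_Q_pow_three x

lemma continuous_Q : Continuous Q :=
  continuous_iff_continuousAt.2 fun x => (hasDerivAt_Q x).continuousAt

lemma continuous_primitive : Continuous primitive :=
  continuous_iff_continuousAt.2 fun x => (hasDerivAt_primitive x).continuousAt

/-- `Q^3 = 5 / (2 cosh² (3x/2)) ≤ 10 e^{-3|x|}`, and `10 < 3^3`. -/
lemma Q_le_three_mul_exp_neg_abs (x : ℝ) : Q x ≤ 3 * exp (-|x|) := by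
  have hc := cosh_pos (3 * x / 2)
  have hcosh : exp (3 * |x| / 2) ≤ 2 * cosh (3 * x / 2) := by
    rw [← cosh_abs, cosh_eq, show |3 * x / 2| = 3 * |x| / 2 by rw [abs_div, abs_mul]; norm_num]
    linarith [exp_pos (-(3 * |x| / 2))]
  have hexp : exp (-|x|) ^ 3 * exp (3 * |x| / 2) ^ 2 = 1 := by
    rw [← exp_nat_mul, ← exp_nat_mul, ← exp_add]
    norm_num
    ring
  have hQ := cosh_sq_mul_Q_pow_three x
  have hc2 : exp (3 * |x| / 2) ^ 2 ≤ 4 * cosh (3 * x / 2) ^ 2 := by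
    nlinarith [exp_pos (3 * |x| / 2)]
  refine le_of_pow_le_pow_left₀ three_ne_zero (by positivity) ?_
  refine le_of_mul_le_mul_left ?_ (pow_pos hc 2)
  nlinarith [pow_pos (exp_pos (-|x|)) 3]

lemma integrable_exp_neg_abs : Integrable fun x : ℝ => exp (-|x|) := by
  rw [← integrableOn_univ, ← Set.Iic_union_Ioi (a := 0)]
  refine IntegrableOn.union ?_ ?_
  · exact (integrableOn_exp_Iic 0).congr_fun
      (fun x hx => by simp [abs_of_nonpos (Set.mem_Iic.1 hx)]) measurableSet_Iic
  · exact (exp_neg_integrableOn_Ioi 0 one_pos).congr_fun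
      (fun x hx => by simp [abs_of_pos (Set.mem_Ioi.1 hx)]) measurableSet_Ioi

lemma integrable_exp_neg_mul_Q_pow {n : ℕ} (hn : 2 ≤ n) :
    Integrable fun x => exp (-x) * Q x ^ n := by
  have hcont := continuous_Q
  refine (integrable_exp_neg_abs.const_mul (3 ^ n)).mono'
    (by fun_prop : Continuous _).aestronglyMeasurable (Filter.Eventually.of_forall fun x => ?_)
  have hQn : Q x ^ n ≤ 3 ^ n * exp (-|x|) ^ 2 :=
    calc Q x ^ n ≤ (3 * exp (-|x|)) ^ n :=
          pow_le_pow_left₀ (Q_pos x).le (Q_le_three_mul_exp_neg_abs x) n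
      _ = 3 ^ n * exp (-|x|) ^ n := mul_pow _ _ _
      _ ≤ 3 ^ n * exp (-|x|) ^ 2 := mul_le_mul_of_nonneg_left
          (pow_le_pow_of_le_one (exp_pos _).le (exp_le_one_iff.2 (neg_nonpos.2 (abs_nonneg x))) hn)
          (by positivity)
  rw [Real.norm_of_nonneg (mul_nonneg (exp_pos _).le (pow_nonneg (Q_pos x).le n))]
  calc exp (-x) * Q x ^ n ≤ exp |x| * (3 ^ n * exp (-|x|) ^ 2) :=
        mul_le_mul (exp_le_exp.2 (neg_le_abs x)) hQn (pow_nonneg (Q_pos x).le n) (exp_pos _).le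
    _ = 3 ^ n * exp (-|x|) := by
        rw [exp_neg]
        field_simp

lemma integrable_primitive : Integrable primitive := by
  refine ((integrable_exp_neg_mul_Q_pow le_rfl).const_mul (3 / 2)).mono'
    continuous_primitive.aestronglyMeasurable (Filter.Eventually.of_forall fun x => ?_)
  have htanh : |tanh (3 * x / 2) - 1 / 2| ≤ 3 / 2 := by
    have := tanh_sq_add_Q_pow_three x
    have := pow_pos (Q_pos x) 3
    rw [abs_le]
    constructor <;> nlinarith
  rw [primitive, Real.norm_eq_abs, abs_mul, abs_of_nonneg (by positivity), mul_comm]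
  gcongr

theorem exp_Q5_Q2_integral :
    (7/5) * ∫ x : ℝ, Real.exp (-x) * (Q x)^5 = (3/2) * ∫ x : ℝ, Real.exp (-x) * (Q x)^2 := by
  have h5 := integrable_exp_neg_mul_Q_pow (n := 5) (by norm_num)
  have h2 := integrable_exp_neg_mul_Q_pow (n := 2) le_rfl
  have hzero := integral_eq_zero_of_hasDerivAt_of_integrable hasDerivAt_primitive
    ((h5.const_mul _).sub (h2.const_mul _)) integrable_primitive
  rw [integral_sub (h5.const_mul _) (h2.const_mul _), integral_const_mul, integral_const_mul]
    at hzero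
  linarith
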